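/- For every integer l ≥ 0 there exist constants c ∈ (0,1), β > 0, C > 0 and N₀ ∈ ℕ such that for every integer N ≥ N₀, every integer n with 0 ≤ n ≤ c·N, and every integer k ≥ 1, the tail integral satisfies ∫_{kT/2}^∞ (ψ_n(x))²·x^l dx ≤ C·e^(−β·k·N), where T = √(2πN). -/

import Mathlib

open MeasureTheory Complex
open scoped BigOperators Matrix Kronecker

noncomputable section

/-- The `n`-th physicists' Hermite polynomial. -/
def hermiteH (n : ℕ) (x : ℝ) : ℝ :=
  (-1 : ℝ) ^ n * Real.exp (x ^ 2) * iteratedDeriv n (fun y => Real.exp (-y ^ 2)) x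

/-- The `n`-th Hermite function. -/
def hermiteFn (n : ℕ) (x : ℝ) : ℝ :=
  (1 / Real.sqrt (2 ^ n * n.factorial * Real.sqrt Real.pi)) * Real.exp (-x ^ 2 / 2) * hermiteH n x

/-!
With `y = √2 x`, the physicists' polynomial is `H_n(x) = 2^{n/2} He_n(y)` for the
probabilists' `He_n = Polynomial.hermite n`, and the three-term recurrence `He_{m+2} = y He_{m+1} - (m+1) He_m`
gives `|He_m(y)| ≤ (|y| + s)^m` as long as `m ≤ s²`. Together with `t^n ≤ n! e^t` this yields
the Gaussian envelope `ψ_n(x)² ≤ e^{3n - x²/2}`, so the tail beyond `a` is at most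
`e^{3n - a²/4} ∫_0^∞ x^l e^{-x²/4} dx`. For `a = kT/2` we have `a²/4 = πk²N/8 ≥ πkN/8`,
and `n ≤ πN/48` leaves `e^{-πkN/16}`.
-/

open Polynomial Set

namespace Polynomial

theorem derivative_hermite_succ (n : ℕ) :
    derivative (hermite (n + 1)) = ((n : ℤ[X]) + 1) * hermite n := by
  induction n with
  | zero => simp
  | succ n ih =>
    rw [hermite_succ (n + 1), derivative_sub, derivative_mul, ih, derivative_mul, hermite_succ n]
    simp only [derivative_X, derivative_add, derivative_natCast, derivative_one, Nat.cast_add,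
      Nat.cast_one]
    ring

theorem hermite_succ_succ (n : ℕ) :
    hermite (n + 2) = X * hermite (n + 1) - ((n : ℤ[X]) + 1) * hermite n := by
  rw [hermite_succ (n + 1), derivative_hermite_succ]

theorem abs_aeval_hermite_le {s : ℝ} (hs : 0 ≤ s) (y : ℝ) :
    ∀ m : ℕ, (m : ℝ) ≤ s ^ 2 → |aeval y (hermite m)| ≤ (|y| + s) ^ m
  | 0, _ => by simp
  | 1, _ => by simpa using hs
  | m + 2, hm => by
    push_cast at hm
    have ih₁ := abs_aeval_hermite_le hs y (m + 1) (by push_cast; linarith)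
    have ih₀ := abs_aeval_hermite_le hs y m (by linarith)
    have key : (m : ℝ) + 1 ≤ s * (|y| + s) := by nlinarith [abs_nonneg y]
    rw [hermite_succ_succ]
    simp only [map_sub, map_mul, aeval_X, map_add, map_natCast, map_one]
    calc |y * aeval y (hermite (m + 1)) - ((m : ℝ) + 1) * aeval y (hermite m)|
        ≤ |y| * |aeval y (hermite (m + 1))| + ((m : ℝ) + 1) * |aeval y (hermite m)| := by
          refine (abs_sub _ _).trans_eq ?_
          rw [abs_mul, abs_mul, abs_of_nonneg (by positivity : (0 : ℝ) ≤ m + 1)]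
      _ ≤ |y| * (|y| + s) ^ (m + 1) + ((m : ℝ) + 1) * (|y| + s) ^ m := by gcongr
      _ = (|y| + s) ^ m * (|y| * (|y| + s) + (m + 1)) := by ring
      _ ≤ (|y| + s) ^ m * (|y| + s) ^ 2 := by gcongr; nlinarith [key]
      _ = (|y| + s) ^ (m + 2) := by ring

end Polynomial

theorem hermiteH_eq_aeval_hermite (n : ℕ) (x : ℝ) :
    hermiteH n x = √2 ^ n * aeval (√2 * x) (hermite n) := by
  have hsq : ∀ y : ℝ, (√2 * y) ^ 2 / 2 = y ^ 2 := fun y => by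
    rw [mul_pow, Real.sq_sqrt zero_le_two]; ring
  have hgauss : (fun y : ℝ => Real.exp (-y ^ 2)) = fun y => Real.exp (-((√2 * y) ^ 2 / 2)) := by
    simp only [hsq]
  rw [hermiteH, hgauss, iteratedDeriv_comp_const_mul (f := fun y => Real.exp (-(y ^ 2 / 2)))
    (by fun_prop)]
  beta_reduce
  rw [iteratedDeriv_eq_iterate, deriv_gaussian_eq_hermite_mul_gaussian, hsq, Real.exp_neg]
  field_simp
  rw [← pow_mul, pow_mul']
  simp

theorem hermiteFn_sq (n : ℕ) (x : ℝ) :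
    hermiteFn n x ^ 2 =
      aeval (√2 * x) (hermite n) ^ 2 * Real.exp (-x ^ 2) / (n.factorial * √Real.pi) := by
  have hexp : Real.exp (-x ^ 2 / 2) ^ 2 = Real.exp (-x ^ 2) := by
    rw [← Real.exp_nat_mul]; ring_nf
  rw [hermiteFn, hermiteH_eq_aeval_hermite, mul_pow, mul_pow, mul_pow, hexp, div_pow,
    Real.sq_sqrt (by positivity), ← pow_mul, mul_comm n 2, pow_mul, Real.sq_sqrt zero_le_two]
  field_simp

theorem pow_le_factorial_mul_exp {u : ℝ} (hu : 0 ≤ u) (n : ℕ) :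
    u ^ n ≤ n.factorial * Real.exp u := by
  have := Real.pow_div_factorial_le_exp _ hu n
  rwa [div_le_iff₀' (by positivity)] at this

theorem eight_pow_mul_exp_le_exp (n : ℕ) :
    (8 : ℝ) ^ n * Real.exp (n / 4) ≤ Real.exp (3 * n) := by
  have h8 : 8 * Real.exp (1 / 4) ≤ Real.exp 3 := by
    have he : 2.7 < Real.exp 1 := lt_trans (by norm_num) Real.exp_one_gt_d9
    have he' : 7 / 4 ≤ Real.exp (3 / 4) := by linarith [Real.add_one_le_exp (3 / 4)]
    have : Real.exp 3 = Real.exp 1 ^ 2 * Real.exp (3 / 4) * Real.exp (1 / 4) := by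
      rw [← Real.exp_nat_mul, ← Real.exp_add, ← Real.exp_add]; norm_num
    rw [this]
    gcongr
    nlinarith
  calc (8 : ℝ) ^ n * Real.exp (n / 4) = (8 * Real.exp (1 / 4)) ^ n := by
        rw [mul_pow, ← Real.exp_nat_mul]; ring_nf
    _ ≤ Real.exp 3 ^ n := by gcongr
    _ = Real.exp (3 * n) := by rw [← Real.exp_nat_mul]; ring_nf

theorem hermiteFn_sq_le (n : ℕ) (x : ℝ) :
    hermiteFn n x ^ 2 ≤ Real.exp (3 * n - x ^ 2 / 2) := by
  set u := (√2 * |x| + √n) ^ 2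
  have hHe : aeval (√2 * x) (hermite n) ^ 2 ≤ u ^ n := by
    rw [← sq_abs, ← pow_mul, mul_comm 2, pow_mul]
    gcongr
    simpa [abs_mul, abs_of_nonneg (Real.sqrt_nonneg 2)] using
      abs_aeval_hermite_le (Real.sqrt_nonneg n) (√2 * x) n (Real.sq_sqrt n.cast_nonneg).ge
  have hu : u ≤ 4 * x ^ 2 + 2 * n := by
    have h2 : √2 ^ 2 = 2 := Real.sq_sqrt zero_le_two
    have hn : √(n : ℝ) ^ 2 = n := Real.sq_sqrt n.cast_nonneg
    nlinarith [sq_nonneg (√2 * |x| - √n), sq_abs x]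
  have hun : u ^ n ≤ 8 ^ n * n.factorial * Real.exp (x ^ 2 / 2 + n / 4) :=
    calc u ^ n = 8 ^ n * (u / 8) ^ n := by rw [← mul_pow]; ring_nf
      _ ≤ 8 ^ n * (n.factorial * Real.exp (u / 8)) := by
          gcongr; exact pow_le_factorial_mul_exp (by positivity) n
      _ ≤ 8 ^ n * n.factorial * Real.exp (x ^ 2 / 2 + n / 4) := by
          rw [← mul_assoc]; gcongr; linarith
  have hpi : 1 ≤ √Real.pi := Real.one_le_sqrt.mpr (by linarith [Real.pi_gt_three])
  calc hermiteFn n x ^ 2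
      ≤ 8 ^ n * n.factorial * Real.exp (x ^ 2 / 2 + n / 4) * Real.exp (-x ^ 2)
          / (n.factorial * √Real.pi) := by
        rw [hermiteFn_sq]; gcongr; exact hHe.trans hun
    _ = 8 ^ n * Real.exp (n / 4) * Real.exp (-x ^ 2 / 2) / √Real.pi := by
        field_simp; rw [← Real.exp_add, ← Real.exp_add]; ring_nf
    _ ≤ 8 ^ n * Real.exp (n / 4) * Real.exp (-x ^ 2 / 2) := div_le_self (by positivity) hpi
    _ ≤ Real.exp (3 * n) * Real.exp (-x ^ 2 / 2) := by gcongr; exact eight_pow_mul_exp_le_exp n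
    _ = Real.exp (3 * n - x ^ 2 / 2) := by rw [← Real.exp_add]; ring_nf

theorem integrableOn_pow_mul_exp_neg_mul_sq {b : ℝ} (hb : 0 < b) (l : ℕ) :
    IntegrableOn (fun x : ℝ => x ^ l * Real.exp (-b * x ^ 2)) (Ioi 0) := by
  have hl : -1 < (l : ℝ) := by linarith [l.cast_nonneg (α := ℝ)]
  simpa only [Real.rpow_natCast] using integrableOn_rpow_mul_exp_neg_mul_sq hb hl

theorem setIntegral_Ioi_sq_hermiteFn_mul_pow_le (n l : ℕ) {a : ℝ} (ha : 0 ≤ a) :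
    ∫ x in Ioi a, hermiteFn n x ^ 2 * x ^ l ≤
      Real.exp (3 * n - a ^ 2 / 4) * ∫ x in Ioi 0, x ^ l * Real.exp (-(1 / 4) * x ^ 2) := by
  have hint := integrableOn_pow_mul_exp_neg_mul_sq (by norm_num : (0 : ℝ) < 1 / 4) l
  have hpos : ∀ x ∈ Ioi (0 : ℝ), 0 ≤ x ^ l * Real.exp (-(1 / 4) * x ^ 2) := fun x hx => by
    have : (0 : ℝ) < x := hx
    positivity
  rw [← integral_const_mul]
  calc ∫ x in Ioi a, hermiteFn n x ^ 2 * x ^ l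
      ≤ ∫ x in Ioi a, Real.exp (3 * n - a ^ 2 / 4) * (x ^ l * Real.exp (-(1 / 4) * x ^ 2)) := by
        have hxl : ∀ᵐ x ∂volume.restrict (Ioi a), 0 ≤ x ^ l := by
          filter_upwards [ae_restrict_mem measurableSet_Ioi] with x hx
          exact pow_nonneg (ha.trans hx.le) l
        refine integral_mono_of_nonneg (hxl.mono fun x hx => by positivity)
          ((hint.mono_set (Ioi_subset_Ioi ha)).const_mul _) ?_
        filter_upwards [ae_restrict_mem measurableSet_Ioi, hxl] with x hx hxl
        have hax : a ^ 2 ≤ x ^ 2 := pow_le_pow_left₀ ha hx.le 2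
        calc hermiteFn n x ^ 2 * x ^ l ≤ Real.exp (3 * n - x ^ 2 / 2) * x ^ l := by
              gcongr; exact hermiteFn_sq_le n x
          _ ≤ Real.exp (3 * n - a ^ 2 / 4 + -(1 / 4) * x ^ 2) * x ^ l := by
              gcongr; linarith
          _ = _ := by rw [Real.exp_add]; ring
    _ ≤ ∫ x in Ioi 0, Real.exp (3 * n - a ^ 2 / 4) * (x ^ l * Real.exp (-(1 / 4) * x ^ 2)) :=
        setIntegral_mono_set (hint.const_mul _)
          ((ae_restrict_iff' measurableSet_Ioi).mpr (ae_of_all _ fun x hx =>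
            mul_nonneg (Real.exp_pos _).le (hpos x hx)))
          (Ioi_subset_Ioi ha).eventuallyLE

/-- Tail integrals of squared Hermite functions against powers are exponentially small:
for every `l` there are constants `c ∈ (0,1)`, `β > 0`, `C > 0`, `N₀` such that for all
`N ≥ N₀`, `n ≤ c·N` and `k ≥ 1`,
`∫_{kT/2}^∞ ψₙ(x)² xˡ dx ≤ C e^{-βkN}` where `T = √(2πN)`. -/
theorem hermite_tail_integral_exponentially_small (l : ℕ) :
    ∃ c β C : ℝ, ∃ N₀ : ℕ, 0 < c ∧ c < 1 ∧ 0 < β ∧ 0 < C ∧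
      ∀ N : ℕ, N₀ ≤ N → ∀ n : ℕ, (n : ℝ) ≤ c * N → ∀ k : ℕ, 1 ≤ k →
        (∫ x in Set.Ioi ((k : ℝ) * Real.sqrt (2 * Real.pi * N) / 2),
            (hermiteFn n x) ^ 2 * x ^ l) ≤ C * Real.exp (-β * k * N) := by
  set I := ∫ x in Ioi 0, x ^ l * Real.exp (-(1 / 4) * x ^ 2)
  have hI : 0 ≤ I := setIntegral_nonneg measurableSet_Ioi fun x hx => by
    have : (0 : ℝ) < x := hx
    positivity
  refine ⟨Real.pi / 48, Real.pi / 16, I + 1, 0, by positivity,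
    by linarith [Real.pi_lt_four], by positivity, by positivity, ?_⟩
  intro N _ n hn k hk
  set a := (k : ℝ) * √(2 * Real.pi * N) / 2
  have ha2 : a ^ 2 = Real.pi * k ^ 2 * N / 2 := by
    rw [div_pow, mul_pow, Real.sq_sqrt (by positivity)]; ring
  have hexp : 3 * n - a ^ 2 / 4 ≤ -(Real.pi / 16) * k * N := by
    have hk1 : (1 : ℝ) ≤ k := by exact_mod_cast hk
    have : Real.pi * N * 1 ≤ Real.pi * N * k := by gcongr
    have : Real.pi * N * k * 1 ≤ Real.pi * N * k * k := by gcongr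
    rw [ha2]; nlinarith
  calc ∫ x in Ioi a, hermiteFn n x ^ 2 * x ^ l
      ≤ Real.exp (3 * n - a ^ 2 / 4) * I :=
        setIntegral_Ioi_sq_hermiteFn_mul_pow_le n l (by positivity)
    _ ≤ Real.exp (-(Real.pi / 16) * k * N) * (I + 1) := by gcongr; linarith
    _ = (I + 1) * Real.exp (-(Real.pi / 16) * k * N) := mul_comm _ _

end
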